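/- arXiv:2502.19703 — 2 statements merged into one kernel-verified Lean document; each statement's English description precedes it below -/
import Mathlib

section
/- Let A be a finite-dimensional commutative algebra over a field k, let M be a finitely generated A-module, and let φ : A → k be a k-linear map whose kernel contains no nonzero ideal of A. Then the map M → Hom_k(Hom_A(M,A), k) sending m to the functional f ↦ φ(f(m)) is surjective. -/
/-! Composing with `φ` embeds `Hom_A(M, A)` into the `k`-dual of `M`: if `φ ∘ f = 0` then the
ideal `f(M)` lies in `ker φ`, so `f = 0`. Dualising this injection gives a surjection
`M ≅ M** → Hom_A(M, A)*` (as `M` is finite-dimensional over `k`), which is the map in question. -/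

section

variable {k A M : Type*} [Field k] [Ring A] [Algebra k A]
  [AddCommGroup M] [Module A M] [Module k M] [IsScalarTower k A M]

variable (M) in
def LinearMap.compFunctional (φ : A →ₗ[k] k) : (M →ₗ[A] A) →ₗ[k] Module.Dual k M where
  toFun f := φ ∘ₗ f.restrictScalars k
  map_add' f₁ f₂ := by ext; simp
  map_smul' c f := by ext; simp

@[simp]
theorem LinearMap.compFunctional_apply (φ : A →ₗ[k] k) (f : M →ₗ[A] A) (m : M) :
    LinearMap.compFunctional M φ f m = φ (f m) :=
  rfl

theorem LinearMap.compFunctional_injective {φ : A →ₗ[k] k}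
    (hφ : ∀ I : Ideal A, (∀ x ∈ I, φ x = 0) → I = ⊥) :
    Function.Injective (LinearMap.compFunctional M φ) := by
  refine (injective_iff_map_eq_zero _).mpr fun f hf => LinearMap.range_eq_bot.mp (hφ _ ?_)
  rintro _ ⟨m, rfl⟩
  simpa using LinearMap.congr_fun hf m

theorem LinearMap.exists_forall_eq_apply_comp [FiniteDimensional k M] {φ : A →ₗ[k] k}
    (hφ : ∀ I : Ideal A, (∀ x ∈ I, φ x = 0) → I = ⊥) (g : (M →ₗ[A] A) →ₗ[k] k) :
    ∃ m : M, ∀ f : M →ₗ[A] A, g f = φ (f m) := by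
  obtain ⟨ξ, hξ⟩ := LinearMap.dualMap_surjective_of_injective (compFunctional_injective hφ) g
  obtain ⟨m, rfl⟩ := (Module.evalEquiv k M).surjective ξ
  exact ⟨m, fun f => by simpa using (LinearMap.congr_fun hξ f).symm⟩

end

/-- Let `A` be a finite-dimensional commutative `k`-algebra, `M` a finitely generated `A`-module,
and `φ : A → k` a `k`-linear map whose kernel contains no nonzero ideal of `A`. Then the map
`M → Hom_k(Hom_A(M,A), k)`, `m ↦ (f ↦ φ (f m))`, is surjective: every `k`-linear functional
`g` on `Hom_A(M,A)` is of the form `f ↦ φ (f m)` for some `m : M`. -/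
theorem stmt3 (k A : Type*) [Field k] [CommRing A] [Algebra k A] [FiniteDimensional k A]
    (M : Type*) [AddCommGroup M] [Module A M] [Module.Finite A M]
    (φ : A →ₗ[k] k) (hφ : ∀ I : Ideal A, (∀ x ∈ I, φ x = 0) → I = ⊥) :
    ∀ g : (M →ₗ[A] A) →ₗ[k] k, ∃ m : M, ∀ f : M →ₗ[A] A, g f = φ (f m) := by
  let : Module k M := Module.compHom M (algebraMap k A)
  have : IsScalarTower k A M := IsScalarTower.of_compHom k A M
  have : Module.Finite k M := Module.Finite.trans A M
  exact LinearMap.exists_forall_eq_apply_comp hφ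
end

section
/- Let k be a commutative ring, let A and B be commutative k-algebras, let I ⊆ A and J ⊆ B be ideals. Assume that B, J, and B/J are flat as k-modules. Denote by I^e and J^e the extensions of I and J to A ⊗_k B along the canonical maps A → A ⊗_k B and B → A ⊗_k B. Then I^e · J^e = I^e ∩ J^e. -/
open TensorProduct

/-- Let `A`, `B` be commutative `k`-algebras and `I ⊆ A`, `J ⊆ B` ideals, with `B`, `J` and
`B/J` flat over `k`. Then the extensions `I^e`, `J^e` of `I` and `J` to `A ⊗[k] B` satisfy
`I^e * J^e = I^e ∩ J^e`. -/
theorem stmt7 (k A B : Type*) [CommRing k] [CommRing A] [CommRing B]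
    [Algebra k A] [Algebra k B] (I : Ideal A) (J : Ideal B)
    [Module.Flat k B] [Module.Flat k ↥J] [Module.Flat k (B ⧸ J)] :
    Ideal.map (Algebra.TensorProduct.includeLeft : A →ₐ[k] A ⊗[k] B) I *
      Ideal.map (Algebra.TensorProduct.includeRight : B →ₐ[k] A ⊗[k] B) J =
    Ideal.map (Algebra.TensorProduct.includeLeft : A →ₐ[k] A ⊗[k] B) I ⊓
      Ideal.map (Algebra.TensorProduct.includeRight : B →ₐ[k] A ⊗[k] B) J := by
  refine le_antisymm Ideal.mul_le_inf ?_
  intro x hx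
  obtain ⟨hxI, hxJ⟩ := hx
  -- notation
  set ι : ↥(I.restrictScalars k) →ₗ[k] A := (I.restrictScalars k).subtype with hι
  set κ : ↥(J.restrictScalars k) →ₗ[k] B := (J.restrictScalars k).subtype with hκ
  set q : B →ₗ[k] (B ⧸ J) := (Ideal.Quotient.mkₐ k J).toLinearMap with hq
  have hqsurj : Function.Surjective q := Ideal.Quotient.mk_surjective
  have hexact : Function.Exact κ q := by
    intro b
    constructor
    · intro hb
      refine ⟨⟨b, ?_⟩, rfl⟩
      simpa [hq, Ideal.Quotient.eq_zero_iff_mem] using hb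
    · rintro ⟨⟨j, hj⟩, rfl⟩
      simpa [hq, hκ, Ideal.Quotient.eq_zero_iff_mem] using hj
  -- x lies in the image of I ⊗ B
  have hxI' : x ∈ LinearMap.range (LinearMap.rTensor B ι) := by
    rw [hι, ← Ideal.map_includeLeft_eq]; exact hxI
  obtain ⟨y, hy⟩ := hxI'
  -- x lies in the image of A ⊗ J
  have hxJ' : x ∈ LinearMap.range (LinearMap.lTensor A κ) := by
    rw [hκ, ← Ideal.map_includeRight_eq]; exact hxJ
  obtain ⟨z, hz⟩ := hxJ'
  -- x maps to 0 in A ⊗ (B ⧸ J)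
  have hqκ : q ∘ₗ κ = 0 := by
    ext ⟨j, hj⟩
    simpa [hq, hκ, Ideal.Quotient.eq_zero_iff_mem] using hj
  have hgx : LinearMap.lTensor A q x = 0 := by
    rw [← hz, ← LinearMap.comp_apply, ← LinearMap.lTensor_comp, hqκ]
    simp
  -- hence y maps to 0 in I ⊗ (B ⧸ J)
  have hcomm : (LinearMap.rTensor (B ⧸ J) ι) ∘ₗ (LinearMap.lTensor ↥(I.restrictScalars k) q)
      = (LinearMap.lTensor A q) ∘ₗ (LinearMap.rTensor B ι) := by
    rw [LinearMap.rTensor_comp_lTensor, LinearMap.lTensor_comp_rTensor]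
  have hinj : Function.Injective (LinearMap.rTensor (B ⧸ J) ι) :=
    Module.Flat.rTensor_preserves_injective_linearMap ι (Submodule.injective_subtype _)
  have hy0 : LinearMap.lTensor ↥(I.restrictScalars k) q y = 0 := by
    apply hinj
    rw [← LinearMap.comp_apply, hcomm, LinearMap.comp_apply, hy, hgx, map_zero]
  -- so y comes from I ⊗ J
  have hex2 : Function.Exact (LinearMap.lTensor ↥(I.restrictScalars k) κ)
      (LinearMap.lTensor ↥(I.restrictScalars k) q) := lTensor_exact _ hexact hqsurj
  obtain ⟨v, hv⟩ : y ∈ LinearMap.range (LinearMap.lTensor ↥(I.restrictScalars k) κ) := by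
    rw [hex2.linearMap_ker_eq.symm]; exact hy0
  -- conclude: x is the image of v under map ι κ
  have hxv : x = TensorProduct.map ι κ v := by
    rw [← hy, ← hv, ← LinearMap.comp_apply, LinearMap.rTensor_comp_lTensor]
  rw [hxv]
  clear hxv hv hy hy0 hgx hz
  induction v with
  | zero => simp
  | tmul i j =>
    have : TensorProduct.map ι κ (i ⊗ₜ[k] j) =
        (Algebra.TensorProduct.includeLeft (S := k) (i : A)) *
          (Algebra.TensorProduct.includeRight ((j : B))) := by
      simp [hι, hκ, Algebra.TensorProduct.tmul_mul_tmul]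
    rw [this]
    exact Ideal.mul_mem_mul (Ideal.mem_map_of_mem _ i.2) (Ideal.mem_map_of_mem _ j.2)
  | add a b ha hb =>
    rw [map_add]
    exact add_mem ha hb
end
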